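/- arXiv:1010.3185 — 2 statements merged into one kernel-verified Lean document; each statement's English description precedes it below -/
import Mathlib

section
/- Let E and F be directed graphs with countable vertex set V. There is a unique isomorphism of Hilbert c₀(V)-bimodules X_E ⊗_{c₀(V)} X_F → X_{E*F} sending χ_e ⊗ χ_f to χ_{(e,f)} for each composable pair (e,f) with s_E(e) = r_F(f). -/
open scoped Classical

structure DirGraph (V : Type) where
  Edge : Type
  r : Edge → V
  s : Edge → V

variable {V : Type}

def DirGraph.fp (E F : DirGraph V) : DirGraph V where
  Edge := {p : E.Edge × F.Edge // E.s p.1 = F.r p.2}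
  r p := E.r p.val.1
  s p := F.s p.val.2

/-- c₀ condition for a function on a (discrete) set. -/
def c0 {α : Type*} [Norm α] (a : V → α) : Prop :=
  ∀ ε > 0, {v | ε ≤ ‖a v‖}.Finite

/-- the fiber of the source map over a vertex -/
def DirGraph.fiber (G : DirGraph V) (v : V) : Type := {e : G.Edge // G.s e = v}

/-- The underlying set of the graph correspondence X_E. -/
def XEset (G : DirGraph V) : Set (G.Edge → ℂ) :=
  {ξ | (∀ v, Summable fun e : G.fiber v => ‖ξ e.val‖ ^ 2) ∧
    c0 fun v => ∑' e : G.fiber v, ‖ξ e.val‖ ^ 2}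

/-- the c₀(V)-valued inner product on X_E -/
noncomputable def innerE (G : DirGraph V) (ξ η : G.Edge → ℂ) : V → ℂ :=
  fun v => ∑' e : G.fiber v, starRingEnd ℂ (ξ e.val) * η e.val

/-- the norm of X_E -/
noncomputable def normE (G : DirGraph V) (ξ : G.Edge → ℂ) : ℝ :=
  ⨆ v : V, Real.sqrt (∑' e : G.fiber v, ‖ξ e.val‖ ^ 2)

/-- characteristic function of an edge -/
noncomputable def chi (G : DirGraph V) (e : G.Edge) : G.Edge → ℂ :=
  fun e' => if e' = e then 1 else 0


lemma chi_mem (G : DirGraph V) (e : G.Edge) : chi G e ∈ XEset G := by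
  have key : ∀ v, ∀ x : G.fiber v, x.val ≠ e → ‖chi G e x.val‖ ^ 2 = 0 := by
    intro v x hx
    simp [chi, hx]
  have hsupp : ∀ v, (Function.support fun x : G.fiber v => ‖chi G e x.val‖ ^ 2).Finite := by
    intro v
    have hsub : (Function.support fun x : G.fiber v => ‖chi G e x.val‖ ^ 2) ⊆
        {x : G.fiber v | x.val = e} := by
      intro x hx
      by_contra h
      exact hx (key v x h)
    have : ({x : G.fiber v | x.val = e}).Subsingleton := by
      intro a ha b hb
      exact Subtype.ext (ha.trans hb.symm)
    exact this.finite.subset hsub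
  have hsum : ∀ v, Summable fun x : G.fiber v => ‖chi G e x.val‖ ^ 2 :=
    fun v => summable_of_finite_support (hsupp v)
  refine ⟨hsum, ?_⟩
  intro ε hε
  have hzero : ∀ v, v ≠ G.s e → (∑' x : G.fiber v, ‖chi G e x.val‖ ^ 2) = 0 := by
    intro v hv
    have : ∀ x : G.fiber v, ‖chi G e x.val‖ ^ 2 = 0 := by
      intro x
      apply key
      intro h
      exact hv (x.property ▸ h ▸ rfl)
    have h0 : (fun x : G.fiber v => ‖chi G e x.val‖ ^ 2) = fun _ => 0 := funext this
    rw [h0, tsum_zero]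
  apply (Set.finite_singleton (G.s e)).subset
  intro v hv
  by_contra h
  have h' : v ≠ G.s e := by simpa using h
  simp only [Set.mem_setOf_eq] at hv
  rw [hzero v h'] at hv
  simp at hv
  linarith

open scoped TensorProduct

/-- The graph correspondence X_E, as a ℂ-submodule of the functions on the edge
set (`XEset G` is a linear subspace, so it coincides with its span). -/
noncomputable def XM {V : Type} (G : DirGraph V) : Submodule ℂ (G.Edge → ℂ) :=
  Submodule.span ℂ (XEset G)

/-- The characteristic function of an edge, as an element of X_E. -/
noncomputable def chiM {V : Type} (G : DirGraph V) (e : G.Edge) : XM G :=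
  ⟨chi G e, Submodule.subset_span (chi_mem G e)⟩

/-- The submodule implementing the balanced tensor product X_E ⊗_{c₀(V)} X_F: the
span of the elements ξ·a ⊗ η - ξ ⊗ a·η for a ∈ c₀(V). -/
noncomputable def balanceN {V : Type} (E F : DirGraph V) :
    Submodule ℂ (XM E ⊗[ℂ] XM F) :=
  Submodule.span ℂ {x | ∃ (ξ : XM E) (η : XM F) (a : V → ℂ), c0 a ∧
    ∃ (ξa : XM E) (aη : XM F),
      (ξa : E.Edge → ℂ) = (fun e => (ξ : E.Edge → ℂ) e * a (E.s e)) ∧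
      (aη : F.Edge → ℂ) = (fun f => a (F.r f) * (η : F.Edge → ℂ) f) ∧
      x = ξa ⊗ₜ[ℂ] η - ξ ⊗ₜ[ℂ] aη}

/-- The canonical linear map X_E ⊗ X_F → (functions on the edges of E*F),
sending ξ ⊗ η to (e,f) ↦ ξ(e)η(f); it induces the tensor seminorm. -/
noncomputable def toFn {V : Type} (E F : DirGraph V) :
    (XM E ⊗[ℂ] XM F) →ₗ[ℂ] ((E.fp F).Edge → ℂ) :=
  TensorProduct.lift (LinearMap.mk₂ ℂ
    (fun ξ η => fun p => (ξ : E.Edge → ℂ) p.val.1 * (η : F.Edge → ℂ) p.val.2)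
    (by intro ξ ξ' η; funext p; simp [add_mul])
    (by intro c ξ η; funext p; simp [smul_eq_mul]; ring)
    (by intro ξ η η'; funext p; simp [mul_add])
    (by intro c ξ η; funext p; simp [smul_eq_mul]; ring))

set_option maxSynthPendingDepth 3
set_option synthInstance.maxHeartbeats 1000000

/-! The map is `ξ ⊗ η ↦ ((e, f) ↦ ξ e * η f)`; it kills the balancing relations because
`s e = r f` on composable pairs. The fibre of `E * F` over `v` is `Σ f ∈ s⁻¹ v, s⁻¹ (r f)`, so the
inner-product formula is Fubini over this sigma type, with absolute summability coming from the
uniform bound on the fibre norms of a `c₀` section. The image contains every finitely supported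
function, and these are dense by truncating fibres. Uniqueness: pairing with `χ_(e,f)` at `s f`
reads off the value at `(e, f)`, so the inner-product identity together with `χ_e ⊗ χ_f ↦ χ_(e,f)`
fixes the map on elementary tensors. -/

open Filter Topology

lemma c0_iff_tendsto {α : Type*} [SeminormedAddGroup α] {a : V → α} :
    c0 a ↔ Tendsto a cofinite (𝓝 0) := by
  simp only [c0, Metric.tendsto_nhds, dist_zero_right, eventually_cofinite, not_lt]

lemma norm_add_sq_le {E : Type*} [SeminormedAddGroup E] (a b : E) :
    ‖a + b‖ ^ 2 ≤ 2 * (‖a‖ ^ 2 + ‖b‖ ^ 2) :=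
  (pow_le_pow_left₀ (norm_nonneg _) (norm_add_le a b) 2).trans add_sq_le

lemma tsum_fiber_normSq_nonneg (G : DirGraph V) (ξ : G.Edge → ℂ) (v : V) :
    0 ≤ ∑' e : G.fiber v, ‖ξ e.val‖ ^ 2 :=
  tsum_nonneg fun _ => by positivity

noncomputable def XEsubmodule (G : DirGraph V) : Submodule ℂ (G.Edge → ℂ) where
  carrier := XEset G
  zero_mem' := ⟨fun _ => by simp [summable_zero], by simp [c0_iff_tendsto, tendsto_const_nhds]⟩
  add_mem' := by
    rintro ξ η ⟨hξ, hξ0⟩ ⟨hη, hη0⟩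
    have hle : ∀ v (e : G.fiber v),
        ‖(ξ + η) e.val‖ ^ 2 ≤ 2 * (‖ξ e.val‖ ^ 2 + ‖η e.val‖ ^ 2) :=
      fun _ _ => norm_add_sq_le _ _
    have hsum : ∀ v, Summable fun e : G.fiber v => ‖(ξ + η) e.val‖ ^ 2 := fun v =>
      Summable.of_nonneg_of_le (fun _ => by positivity) (hle v) (((hξ v).add (hη v)).mul_left 2)
    refine ⟨hsum, c0_iff_tendsto.2 ?_⟩
    rw [c0_iff_tendsto] at hξ0 hη0
    refine squeeze_zero_norm (fun v => ?_) (by simpa using (hξ0.add hη0).const_mul 2)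
    rw [Real.norm_of_nonneg (tsum_fiber_normSq_nonneg G _ v), ← (hξ v).tsum_add (hη v),
      ← tsum_mul_left]
    exact (hsum v).tsum_le_tsum (hle v) (((hξ v).add (hη v)).mul_left 2)
  smul_mem' := by
    rintro c ξ ⟨hξ, hξ0⟩
    have heq : ∀ v (e : G.fiber v), ‖(c • ξ) e.val‖ ^ 2 = ‖c‖ ^ 2 * ‖ξ e.val‖ ^ 2 := by
      intro v e
      simp [mul_pow]
    refine ⟨fun v => by simpa only [heq] using (hξ v).mul_left _, ?_⟩
    simp only [heq, tsum_mul_left]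
    rw [c0_iff_tendsto] at hξ0 ⊢
    simpa using hξ0.const_mul (‖c‖ ^ 2)

lemma XM_eq_XEsubmodule (G : DirGraph V) : XM G = XEsubmodule G :=
  Submodule.span_eq (XEsubmodule G)

lemma coe_mem_XEset {G : DirGraph V} (ξ : XM G) : (ξ : G.Edge → ℂ) ∈ XEset G :=
  (XM_eq_XEsubmodule G).le ξ.2

lemma exists_tsum_fiber_normSq_le {G : DirGraph V} {ξ : G.Edge → ℂ} (hξ : ξ ∈ XEset G) :
    ∃ M, ∀ v, ∑' e : G.fiber v, ‖ξ e.val‖ ^ 2 ≤ M := by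
  obtain ⟨M, hM⟩ := (c0_iff_tendsto.1 hξ.2).bddAbove_range_of_cofinite
  exact ⟨M, fun v => hM ⟨v, rfl⟩⟩

lemma summable_conj_mul_of_summable_normSq {ι : Type*} {a b : ι → ℂ}
    (ha : Summable fun i => ‖a i‖ ^ 2) (hb : Summable fun i => ‖b i‖ ^ 2) :
    Summable fun i => starRingEnd ℂ (a i) * b i :=
  Summable.of_norm_bounded (ha.add hb) fun i => by
    rw [norm_mul, Complex.norm_conj]
    nlinarith [two_mul_le_add_sq ‖a i‖ ‖b i‖, norm_nonneg (a i), norm_nonneg (b i)]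

namespace DirGraph

variable {E F : DirGraph V}

def tensorFn (ξ : E.Edge → ℂ) (η : F.Edge → ℂ) : (E.fp F).Edge → ℂ :=
  fun p => ξ p.val.1 * η p.val.2

lemma tensorFn_chi (p : (E.fp F).Edge) :
    tensorFn (chi E p.val.1) (chi F p.val.2) = chi (E.fp F) p := by
  funext x
  by_cases hx : x = p
  · simp [hx, chi, tensorFn]
  · have hne : x.val.1 ≠ p.val.1 ∨ x.val.2 ≠ p.val.2 := by
      by_contra! hc
      exact hx (Subtype.ext (Prod.ext hc.1 hc.2))
    rcases hne with h | h <;> simp [tensorFn, chi, h, hx]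

def fpFiberEquiv (E F : DirGraph V) (v : V) :
    (E.fp F).fiber v ≃ Σ f : F.fiber v, E.fiber (F.r f.val) where
  toFun p := ⟨⟨p.val.val.2, p.prop⟩, ⟨p.val.val.1, p.val.prop⟩⟩
  invFun q := ⟨⟨(q.2.val, q.1.val), q.2.prop⟩, q.1.prop⟩

lemma summable_fp_fiber_iff_of_nonneg {v : V} {u : (E.fp F).Edge → ℝ} (hu : 0 ≤ u) :
    (Summable fun p : (E.fp F).fiber v => u p.val) ↔
      (∀ f : F.fiber v, Summable fun e : E.fiber (F.r f.val) => u ⟨(e.val, f.val), e.prop⟩) ∧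
      Summable fun f : F.fiber v => ∑' e : E.fiber (F.r f.val), u ⟨(e.val, f.val), e.prop⟩ := by
  rw [← (fpFiberEquiv E F v).symm.summable_iff]
  exact summable_sigma_of_nonneg fun _ => hu _

lemma tsum_fp_fiber {α : Type*} [NormedAddCommGroup α] [CompleteSpace α] {v : V}
    {u : (E.fp F).Edge → α} (hu : Summable fun p : (E.fp F).fiber v => u p.val) :
    ∑' p : (E.fp F).fiber v, u p.val =
      ∑' (f : F.fiber v) (e : E.fiber (F.r f.val)), u ⟨(e.val, f.val), e.prop⟩ := by
  rw [← (fpFiberEquiv E F v).symm.summable_iff] at hu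
  rw [← (fpFiberEquiv E F v).symm.tsum_eq]
  exact hu.tsum_sigma' fun f => hu.sigma_factor f

lemma summable_normSq_tensorFn {ξ : E.Edge → ℂ} {η : F.Edge → ℂ} (hξ : ξ ∈ XEset E)
    (hη : η ∈ XEset F) (v : V) :
    Summable fun p : (E.fp F).fiber v => ‖tensorFn ξ η p.val‖ ^ 2 := by
  obtain ⟨M, hM⟩ := exists_tsum_fiber_normSq_le hξ
  refine (summable_fp_fiber_iff_of_nonneg (u := fun p => ‖tensorFn ξ η p‖ ^ 2)
    fun _ => by positivity).2 ⟨fun f => ?_, ?_⟩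
  · simpa only [tensorFn, norm_mul, mul_pow] using (hξ.1 (F.r f.val)).mul_right (‖η f.val‖ ^ 2)
  · refine Summable.of_nonneg_of_le (fun _ => tsum_nonneg fun _ => by positivity) (fun f => ?_)
      ((hη.1 v).mul_right M)
    simp only [tensorFn, norm_mul, mul_pow, tsum_mul_right]
    rw [mul_comm]
    exact mul_le_mul_of_nonneg_left (hM _) (by positivity)

lemma tsum_normSq_tensorFn_le {ξ : E.Edge → ℂ} {η : F.Edge → ℂ} (hξ : ξ ∈ XEset E)
    (hη : η ∈ XEset F) {M : ℝ} (hM : ∀ w, ∑' e : E.fiber w, ‖ξ e.val‖ ^ 2 ≤ M) (v : V) :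
    ∑' p : (E.fp F).fiber v, ‖tensorFn ξ η p.val‖ ^ 2 ≤ M * ∑' f : F.fiber v, ‖η f.val‖ ^ 2 := by
  rw [tsum_fp_fiber (u := fun p => ‖tensorFn ξ η p‖ ^ 2) (summable_normSq_tensorFn hξ hη v),
    ← tsum_mul_left]
  refine Summable.tsum_le_tsum (fun f => ?_) ?_ ((hη.1 v).mul_left M)
  · simp only [tensorFn, norm_mul, mul_pow, tsum_mul_right]
    exact mul_le_mul_of_nonneg_right (hM _) (by positivity)
  · exact ((summable_fp_fiber_iff_of_nonneg (u := fun p => ‖tensorFn ξ η p‖ ^ 2)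
      fun _ => by positivity).1
      (summable_normSq_tensorFn hξ hη v)).2

lemma tensorFn_mem_XEset {ξ : E.Edge → ℂ} {η : F.Edge → ℂ} (hξ : ξ ∈ XEset E)
    (hη : η ∈ XEset F) : tensorFn ξ η ∈ XEset (E.fp F) := by
  obtain ⟨M, hM⟩ := exists_tsum_fiber_normSq_le hξ
  refine ⟨summable_normSq_tensorFn hξ hη, c0_iff_tendsto.2 ?_⟩
  refine squeeze_zero_norm (fun v => ?_) (by simpa using (c0_iff_tendsto.1 hη.2).const_mul M)
  rw [Real.norm_of_nonneg (tsum_fiber_normSq_nonneg _ _ v)]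
  exact tsum_normSq_tensorFn_le hξ hη hM v

lemma innerE_tensorFn {ξ ξ' : E.Edge → ℂ} {η η' : F.Edge → ℂ} (hξ : ξ ∈ XEset E)
    (hξ' : ξ' ∈ XEset E) (hη : η ∈ XEset F) (hη' : η' ∈ XEset F) :
    innerE (E.fp F) (tensorFn ξ η) (tensorFn ξ' η') = fun v => ∑' f : F.fiber v,
      starRingEnd ℂ (η f.val) * innerE E ξ ξ' (F.r f.val) * η' f.val := by
  funext v
  rw [innerE, tsum_fp_fiber
    (u := fun p => starRingEnd ℂ (tensorFn ξ η p) * tensorFn ξ' η' p)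
    (summable_conj_mul_of_summable_normSq
    (summable_normSq_tensorFn hξ hη v) (summable_normSq_tensorFn hξ' hη' v))]
  refine tsum_congr fun f => ?_
  simp only [innerE, tensorFn, map_mul]
  rw [mul_assoc, ← tsum_mul_right, ← tsum_mul_left]
  exact tsum_congr fun e => by ring

end DirGraph

lemma tsum_conj_chi_mul (G : DirGraph V) (e : G.Edge) (A : G.fiber (G.s e) → ℂ) :
    ∑' x : G.fiber (G.s e), starRingEnd ℂ (chi G e x.val) * A x = A ⟨e, rfl⟩ := by
  rw [tsum_eq_single ⟨e, rfl⟩ fun x hx => ?_]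
  · simp [chi]
  · have : x.val ≠ e := fun h => hx (Subtype.ext h)
    simp [chi, this]

lemma sum_smul_chi (G : DirGraph V) (S : Finset G.Edge) (c : G.Edge → ℂ) :
    ∑ p ∈ S, c p • chi G p = (S : Set G.Edge).indicator c := by
  funext x
  simp [Finset.sum_apply, chi, Set.indicator_apply]

lemma exists_finset_normE_sub_indicator_lt {G : DirGraph V} {ζ : G.Edge → ℂ}
    (hζ : ζ ∈ XEset G) {ε : ℝ} (hε : 0 < ε) :
    ∃ S : Finset G.Edge, normE G (ζ - (S : Set G.Edge).indicator ζ) < ε := by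
  set δ := (ε / 2) ^ 2
  have hδ : 0 < δ := by positivity
  -- Keep, at each of the finitely many vertices where `ζ` has fibre mass `≥ δ`, a finite part of
  -- the fibre carrying all but `δ` of it; every fibre of the remainder then has mass `≤ δ`.
  have htail : ∀ v, ∃ t : Finset (G.fiber v), ∑' x : {x // x ∉ t}, ‖ζ x.val.val‖ ^ 2 < δ :=
    fun v => ((tendsto_tsum_compl_atTop_zero fun x : G.fiber v => ‖ζ x.val‖ ^ 2).eventually
      (gt_mem_nhds hδ)).exists
  choose t ht using htail
  set T := (hζ.2 δ hδ).toFinset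
  set S := T.biUnion fun v => (t v).image Subtype.val
  refine ⟨S, ?_⟩
  rw [← Set.indicator_compl]
  set r := fun x : G.Edge => ‖(S : Set G.Edge)ᶜ.indicator ζ x‖ ^ 2
  have hr_le : ∀ x, r x ≤ ‖ζ x‖ ^ 2 := fun x => by
    by_cases hx : x ∈ S <;> simp [r, hx]
  have hr_summable : ∀ v, Summable fun x : G.fiber v => r x.val := fun v =>
    Summable.of_nonneg_of_le (fun _ => by positivity) (fun x => hr_le x.val) (hζ.1 v)
  have hfiber : ∀ v, ∑' x : G.fiber v, r x.val ≤ δ := fun v => by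
    by_cases hv : v ∈ T
    · refine ((hr_summable v).tsum_le_tsum (g := ((t v : Set (G.fiber v))ᶜ).indicator
        fun x => ‖ζ x.val‖ ^ 2) (fun x => ?_) ?_).trans ?_
      · by_cases hx : x ∈ t v
        · have : x.val ∈ S := Finset.mem_biUnion.2 ⟨v, hv, Finset.mem_image_of_mem _ hx⟩
          simp [r, this, hx]
        · simpa [hx] using hr_le x.val
      · exact (hζ.1 v).indicator _
      · rw [← tsum_subtype]
        exact (ht v).le
    · have hsmall : ∑' x : G.fiber v, ‖ζ x.val‖ ^ 2 < δ := by
        simpa [T, abs_of_nonneg (tsum_fiber_normSq_nonneg G ζ v)] using hv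
      have hle : ∑' x : G.fiber v, r x.val ≤ ∑' x : G.fiber v, ‖ζ x.val‖ ^ 2 :=
        Summable.tsum_le_tsum (fun x => hr_le x.val) (hr_summable v) (hζ.1 v)
      exact hle.trans hsmall.le
  calc normE G ((S : Set G.Edge)ᶜ.indicator ζ) ≤ ε / 2 :=
        Real.iSup_le (fun v => (Real.sqrt_le_sqrt (hfiber v)).trans_eq
          (Real.sqrt_sq (by positivity))) (by positivity)
    _ < ε := by linarith

section TensorMap

variable (E F : DirGraph V)

lemma toFn_tmul (ξ : XM E) (η : XM F) :
    toFn E F (ξ ⊗ₜ[ℂ] η) = DirGraph.tensorFn (ξ : E.Edge → ℂ) (η : F.Edge → ℂ) := rfl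

lemma toFn_mem_XM (x : XM E ⊗[ℂ] XM F) : toFn E F x ∈ XM (E.fp F) := by
  induction x using TensorProduct.induction_on with
  | zero => simp
  | tmul ξ η =>
    exact Submodule.subset_span
      (DirGraph.tensorFn_mem_XEset (coe_mem_XEset ξ) (coe_mem_XEset η))
  | add x y hx hy => simpa using add_mem hx hy

lemma balanceN_le_ker_toFn : balanceN E F ≤ LinearMap.ker (toFn E F) := by
  rw [balanceN, Submodule.span_le]
  rintro x ⟨ξ, η, a, -, ξa, aη, hξa, haη, rfl⟩
  simp only [SetLike.mem_coe, LinearMap.mem_ker, map_sub, toFn_tmul, hξa, haη, sub_eq_zero]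
  funext p
  simp only [DirGraph.tensorFn, p.prop]
  ring

noncomputable def tensorToFp : ((XM E ⊗[ℂ] XM F) ⧸ balanceN E F) →ₗ[ℂ] XM (E.fp F) :=
  (balanceN E F).liftQ ((toFn E F).codRestrict _ (toFn_mem_XM E F)) fun _ hx =>
    Subtype.ext (balanceN_le_ker_toFn E F hx)

lemma tensorToFp_mk (x : XM E ⊗[ℂ] XM F) :
    (tensorToFp E F (Submodule.Quotient.mk x) : (E.fp F).Edge → ℂ) = toFn E F x := rfl

lemma tensorToFp_mk_sum_chi (S : Finset (E.fp F).Edge) (c : (E.fp F).Edge → ℂ) :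
    (tensorToFp E F (Submodule.Quotient.mk
      (∑ p ∈ S, c p • (chiM E p.val.1 ⊗ₜ[ℂ] chiM F p.val.2))) : (E.fp F).Edge → ℂ) =
      (S : Set (E.fp F).Edge).indicator c := by
  simp only [tensorToFp_mk, map_sum, map_smul, toFn_tmul, chiM, DirGraph.tensorFn_chi, sum_smul_chi]

lemma exists_normE_sub_tensorToFp_lt (ζ : XM (E.fp F)) {ε : ℝ} (hε : 0 < ε) :
    ∃ q, normE (E.fp F) ((ζ : (E.fp F).Edge → ℂ) - (tensorToFp E F q : (E.fp F).Edge → ℂ)) <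
      ε := by
  obtain ⟨S, hS⟩ := exists_finset_normE_sub_indicator_lt (coe_mem_XEset ζ) hε
  exact ⟨_, by rwa [tensorToFp_mk_sum_chi]⟩

variable {E F}

lemma eq_tensorToFp_of_inner (Φ : ((XM E ⊗[ℂ] XM F) ⧸ balanceN E F) →ₗ[ℂ] XM (E.fp F))
    (hchi : ∀ (e : E.Edge) (f : F.Edge) (h : E.s e = F.r f),
      Φ (Submodule.Quotient.mk (chiM E e ⊗ₜ[ℂ] chiM F f)) = chiM (E.fp F) ⟨(e, f), h⟩)
    (hinner : ∀ (ξ ξ' : XM E) (η η' : XM F),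
      innerE (E.fp F) (Φ (Submodule.Quotient.mk (ξ ⊗ₜ[ℂ] η)) : (E.fp F).Edge → ℂ)
          (Φ (Submodule.Quotient.mk (ξ' ⊗ₜ[ℂ] η')) : (E.fp F).Edge → ℂ) =
        fun v => ∑' f : F.fiber v,
          starRingEnd ℂ ((η : F.Edge → ℂ) f.val) *
            innerE E (ξ : E.Edge → ℂ) (ξ' : E.Edge → ℂ) (F.r f.val) *
            (η' : F.Edge → ℂ) f.val) :
    Φ = tensorToFp E F := by
  refine Submodule.linearMap_qext _ <| TensorProduct.ext' fun ξ η =>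
    Subtype.ext <| funext fun ⟨⟨e, f⟩, h⟩ => ?_
  set Φξη := (Φ (Submodule.Quotient.mk (ξ ⊗ₜ[ℂ] η)) : (E.fp F).Edge → ℂ)
  have hinner_chi := congrFun (hinner (chiM E e) ξ (chiM F f) η) (F.s f)
  rw [hchi e f h] at hinner_chi
  have hξ : innerE E (chi E e) ξ (F.r f) = (ξ : E.Edge → ℂ) e := by
    rw [← h]
    exact tsum_conj_chi_mul E e _
  calc Φξη ⟨(e, f), h⟩
      = innerE (E.fp F) (chi (E.fp F) ⟨(e, f), h⟩) Φξη (F.s f) :=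
        (tsum_conj_chi_mul (E.fp F) ⟨(e, f), h⟩ fun x => Φξη x.val).symm
    _ = ∑' x : F.fiber (F.s f), starRingEnd ℂ (chi F f x.val) *
          (innerE E (chi E e) ξ (F.r x.val) * (η : F.Edge → ℂ) x.val) :=
        hinner_chi.trans (tsum_congr fun _ => mul_assoc _ _ _)
    _ = (ξ : E.Edge → ℂ) e * (η : F.Edge → ℂ) f := by
        rw [tsum_conj_chi_mul F f fun x => innerE E (chi E e) ξ (F.r x.val) * _, hξ]

end TensorMap

theorem stmt10_general {V : Type} (E F : DirGraph V) :
    ∃! Φ : ((XM E ⊗[ℂ] XM F) ⧸ balanceN E F) →ₗ[ℂ] XM (E.fp F),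
      (∀ (e : E.Edge) (f : F.Edge) (h : E.s e = F.r f),
        Φ (Submodule.Quotient.mk (chiM E e ⊗ₜ[ℂ] chiM F f)) =
          chiM (E.fp F) ⟨(e, f), h⟩) ∧
      (∀ (ξ ξ' : XM E) (η η' : XM F),
        innerE (E.fp F) (Φ (Submodule.Quotient.mk (ξ ⊗ₜ[ℂ] η)) : (E.fp F).Edge → ℂ)
            (Φ (Submodule.Quotient.mk (ξ' ⊗ₜ[ℂ] η')) : (E.fp F).Edge → ℂ) =
          fun v => ∑' f : F.fiber v,
            starRingEnd ℂ ((η : F.Edge → ℂ) f.val) *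
              innerE E (ξ : E.Edge → ℂ) (ξ' : E.Edge → ℂ) (F.r f.val) *
              (η' : F.Edge → ℂ) f.val) ∧
      (∀ (a : V → ℂ), c0 a → ∀ (ξ ξa : XM E) (η : XM F),
        ((ξa : E.Edge → ℂ) = fun e => a (E.r e) * (ξ : E.Edge → ℂ) e) →
        (Φ (Submodule.Quotient.mk (ξa ⊗ₜ[ℂ] η)) : (E.fp F).Edge → ℂ) =
          fun p => a ((E.fp F).r p) *
            (Φ (Submodule.Quotient.mk (ξ ⊗ₜ[ℂ] η)) : (E.fp F).Edge → ℂ) p) ∧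
      (∀ (a : V → ℂ), c0 a → ∀ (ξ : XM E) (η ηa : XM F),
        ((ηa : F.Edge → ℂ) = fun f => (η : F.Edge → ℂ) f * a (F.s f)) →
        (Φ (Submodule.Quotient.mk (ξ ⊗ₜ[ℂ] ηa)) : (E.fp F).Edge → ℂ) =
          fun p =>
            (Φ (Submodule.Quotient.mk (ξ ⊗ₜ[ℂ] η)) : (E.fp F).Edge → ℂ) p *
              a ((E.fp F).s p)) ∧
      (∀ ζ : XM (E.fp F), ∀ ε > 0, ∃ q,
        normE (E.fp F) ((ζ : (E.fp F).Edge → ℂ) - (Φ q : (E.fp F).Edge → ℂ)) < ε) := by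
  refine ⟨tensorToFp E F, ⟨fun e f h => Subtype.ext (DirGraph.tensorFn_chi ⟨(e, f), h⟩),
    fun ξ ξ' η η' => DirGraph.innerE_tensorFn (coe_mem_XEset ξ) (coe_mem_XEset ξ')
      (coe_mem_XEset η) (coe_mem_XEset η'), ?_, ?_,
    fun ζ _ hε => exists_normE_sub_tensorToFp_lt E F ζ hε⟩,
    fun Φ ⟨hchi, hinner, _⟩ => eq_tensorToFp_of_inner Φ hchi hinner⟩
  · intro a _ ξ ξa η hξa
    funext p
    simp only [tensorToFp_mk, toFn_tmul, DirGraph.tensorFn, hξa]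
    exact mul_assoc _ _ _
  · intro a _ ξ η ηa hηa
    funext p
    simp only [tensorToFp_mk, toFn_tmul, DirGraph.tensorFn, hηa]
    exact (mul_assoc _ _ _).symm

/-- There is a unique isomorphism of Hilbert c₀(V)-bimodules
X_E ⊗_{c₀(V)} X_F → X_{E*F} sending χ_e ⊗ χ_f to χ_{(e,f)} for composable (e,f):
formally, there is a unique linear map Φ on the balanced tensor product
(the quotient by the balancing submodule) which sends the classes of the
χ_e ⊗ χ_f to χ_{(e,f)}, preserves the c₀(V)-valued inner products of (classes of)
elementary tensors, intertwines the left and right c₀(V)-actions on elementary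
tensors, and has dense range. -/
theorem stmt10 {V : Type} [Countable V] (E F : DirGraph V) :
    ∃! Φ : ((XM E ⊗[ℂ] XM F) ⧸ balanceN E F) →ₗ[ℂ] XM (E.fp F),
      (∀ (e : E.Edge) (f : F.Edge) (h : E.s e = F.r f),
        Φ (Submodule.Quotient.mk (chiM E e ⊗ₜ[ℂ] chiM F f)) =
          chiM (E.fp F) ⟨(e, f), h⟩) ∧
      (∀ (ξ ξ' : XM E) (η η' : XM F),
        innerE (E.fp F) (Φ (Submodule.Quotient.mk (ξ ⊗ₜ[ℂ] η)) : (E.fp F).Edge → ℂ)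
            (Φ (Submodule.Quotient.mk (ξ' ⊗ₜ[ℂ] η')) : (E.fp F).Edge → ℂ) =
          fun v => ∑' f : F.fiber v,
            starRingEnd ℂ ((η : F.Edge → ℂ) f.val) *
              innerE E (ξ : E.Edge → ℂ) (ξ' : E.Edge → ℂ) (F.r f.val) *
              (η' : F.Edge → ℂ) f.val) ∧
      (∀ (a : V → ℂ), c0 a → ∀ (ξ ξa : XM E) (η : XM F),
        ((ξa : E.Edge → ℂ) = fun e => a (E.r e) * (ξ : E.Edge → ℂ) e) →
        (Φ (Submodule.Quotient.mk (ξa ⊗ₜ[ℂ] η)) : (E.fp F).Edge → ℂ) =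
          fun p => a ((E.fp F).r p) *
            (Φ (Submodule.Quotient.mk (ξ ⊗ₜ[ℂ] η)) : (E.fp F).Edge → ℂ) p) ∧
      (∀ (a : V → ℂ), c0 a → ∀ (ξ : XM E) (η ηa : XM F),
        ((ηa : F.Edge → ℂ) = fun f => (η : F.Edge → ℂ) f * a (F.s f)) →
        (Φ (Submodule.Quotient.mk (ξ ⊗ₜ[ℂ] ηa)) : (E.fp F).Edge → ℂ) =
          fun p =>
            (Φ (Submodule.Quotient.mk (ξ ⊗ₜ[ℂ] η)) : (E.fp F).Edge → ℂ) p *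
              a ((E.fp F).s p)) ∧
      (∀ ζ : XM (E.fp F), ∀ ε > 0, ∃ q,
        normE (E.fp F) ((ζ : (E.fp F).Edge → ℂ) - (Φ q : (E.fp F).Edge → ℂ)) < ε) :=
  stmt10_general E F
end

section
/- Let V be a locally compact Hausdorff space, E a topological graph with vertex space V, and suppose the topological graph correspondence X_E is a symmetric C₀(V)-imprimitivity bimodule (f·ξ = ξ·f for all f ∈ C₀(V), ξ ∈ X_E). Then r = s on E¹ and s : E¹ → V is a homeomorphism; consequently E is isomorphic, by a vertex-fixing isomorphism, to the trivial topological graph (V, V, id, id), and X_E is isomorphic to the trivial C₀(V)-correspondence. -/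
open ZeroAtInfty

/-- The underlying set of the topological-graph correspondence X_E of a topological
graph with edge space `E1` and source map `s`: continuous functions ξ on the edge
space such that v ↦ Σ_{s(e)=v} |ξ(e)|² belongs to C₀(V). -/
def XTset {V E1 : Type} [TopologicalSpace V] [TopologicalSpace E1]
    (s : E1 → V) : Set (E1 → ℂ) :=
  {ξ | Continuous ξ ∧
    (∀ v, Summable fun e : {e : E1 // s e = v} => ‖ξ e.val‖ ^ 2) ∧
    Continuous (fun v => ∑' e : {e : E1 // s e = v}, ‖ξ e.val‖ ^ 2) ∧
    Filter.Tendsto (fun v => ∑' e : {e : E1 // s e = v}, ‖ξ e.val‖ ^ 2)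
      (Filter.cocompact V) (nhds 0)}

/-- The C₀(V)-valued inner product on X_E. -/
noncomputable def innerT {V E1 : Type} [TopologicalSpace V] [TopologicalSpace E1]
    (s : E1 → V) (ξ η : E1 → ℂ) : V → ℂ :=
  fun v => ∑' e : {e : E1 // s e = v}, starRingEnd ℂ (ξ e.val) * η e.val

/-- The norm of X_E. -/
noncomputable def normT {V E1 : Type} [TopologicalSpace V] [TopologicalSpace E1]
    (s : E1 → V) (ξ : E1 → ℂ) : ℝ :=
  ⨆ v : V, Real.sqrt (∑' e : {e : E1 // s e = v}, ‖ξ e.val‖ ^ 2)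

/-!
Symmetry says `f (r e) * ξ e = ξ e * f (s e)` for all `f ∈ C₀(V)`. Every edge carries a section
`ξ` with `ξ e ≠ 0` (a bump function on a chart of `s`), and `C₀(V)` separates points, so `r = s`.
If `s e₁ = s e₂` with `e₁ ≠ e₂`, take a section `ξ` supported in a chart around `e₁` and vanishing
at `e₂`. Read at `e₂`, the compatibility `L ξ ξ · ζ = ξ · ⟨ξ, ζ⟩` forces `L ξ ξ (s e₂) = 0`. Read
at `e₁` with `ζ = ξ`, it gives `L ξ ξ (s e₁) = ⟨ξ, ξ⟩ (s e₁) = |ξ e₁|² ≠ 0`. Fullness of `⟨·, ·⟩`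
rules out empty fibres, so `s` is a bijective local homeomorphism, i.e. a homeomorphism. Then
every fibre is a point, `X_E = {f ∘ s | f ∈ C₀(V)}`, and `ξ ↦ ξ ∘ s⁻¹` identifies `X_E` with the
trivial correspondence.
-/

open Filter Set Function

section Fibers

variable {V E1 α : Type*} [AddCommMonoid α] [TopologicalSpace α]

theorem hasSum_fiber_of_injOn {s : E1 → V} {F : E1 → α} (hF : InjOn s (support F)) {e₀ : E1}
    (he₀ : F e₀ ≠ 0) : HasSum (fun e : {e : E1 // s e = s e₀} => F e) (F e₀) :=
  hasSum_single (f := fun e : {e : E1 // s e = s e₀} => F e) ⟨e₀, rfl⟩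
    fun e he => by_contra fun hFe => he (Subtype.ext (hF hFe he₀ e.2))

theorem hasSum_fiber_of_support_subset_source (φ : PartialEquiv E1 V) {F : E1 → α}
    (hF : support F ⊆ φ.source) (v : V) :
    HasSum (fun e : {e : E1 // φ e = v} => F e) (φ.target.indicator (F ∘ φ.symm) v) := by
  by_cases hv : v ∈ φ.target
  · rw [indicator_of_mem hv]
    refine hasSum_single (f := fun e : {e : E1 // φ e = v} => F e) ⟨φ.symm v, φ.right_inv hv⟩
      fun e he => by_contra fun hFe => he (Subtype.ext ?_)
    exact φ.injOn (hF hFe) (φ.map_target hv) (by rw [e.2, φ.right_inv hv])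
  · rw [indicator_of_notMem hv]
    convert hasSum_zero with e
    by_contra hFe
    exact hv (e.2 ▸ φ.map_source (hF hFe))

theorem hasSum_fiber_homeomorph [TopologicalSpace V] [TopologicalSpace E1] (φ : E1 ≃ₜ V)
    (F : E1 → α) (v : V) : HasSum (fun e : {e : E1 // φ e = v} => F e) (F (φ.symm v)) := by
  have := hasSum_fiber_of_support_subset_source φ.toEquiv.toPartialEquiv (F := F)
    (subset_univ _) v
  rwa [Equiv.toPartialEquiv_target, indicator_univ] at this

end Fibers

theorem OpenPartialHomeomorph.tsupport_indicator_comp_symm_subset {X Y β : Type*}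
    [TopologicalSpace X] [TopologicalSpace Y] [T2Space Y] [Zero β] (φ : OpenPartialHomeomorph X Y)
    {F : X → β} {K : Set X} (hK : IsCompact K) (hKφ : K ⊆ φ.source) (hFK : support F ⊆ K) :
    tsupport (φ.target.indicator (F ∘ φ.symm)) ⊆ φ '' K := by
  refine closure_minimal (fun v hv => ?_)
    (hK.image_of_continuousOn (φ.continuousOn.mono hKφ)).isClosed
  obtain ⟨hvφ, hFv⟩ := support_indicator.subset hv
  exact ⟨φ.symm v, hFK hFv, φ.right_inv hvφ⟩

section Correspondence

variable {V E1 : Type} [TopologicalSpace V] [TopologicalSpace E1]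

theorem mem_XTset_of_support_subset_compact [T2Space V] (φ : OpenPartialHomeomorph E1 V)
    {ξ : E1 → ℂ} (hξ : Continuous ξ) {K : Set E1} (hK : IsCompact K) (hKφ : K ⊆ φ.source)
    (hξK : support ξ ⊆ K) : ξ ∈ XTset φ := by
  have hFK : support (fun e => ‖ξ e‖ ^ 2) ⊆ K := fun e he => hξK (by simpa using he)
  have hfib : (fun v => ∑' e : {e : E1 // φ e = v}, ‖ξ e‖ ^ 2) =
      φ.target.indicator ((fun e => ‖ξ e‖ ^ 2) ∘ φ.symm) := funext fun v =>
    (hasSum_fiber_of_support_subset_source φ.toPartialEquiv (hFK.trans hKφ) v).tsum_eq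
  have hsupp := φ.tsupport_indicator_comp_symm_subset hK hKφ hFK
  refine ⟨hξ, fun v =>
    (hasSum_fiber_of_support_subset_source φ.toPartialEquiv (hFK.trans hKφ) v).summable, ?_, ?_⟩
  · rw [hfib]
    refine ContinuousOn.continuous_of_tsupport_subset ?_ φ.open_target
      (hsupp.trans (φ.image_source_eq_target ▸ image_mono hKφ))
    exact (continuousOn_congr fun v hv => indicator_of_mem hv _).2
      ((hξ.norm.pow 2).comp_continuousOn φ.continuousOn_symm)
  · rw [hfib]
    exact HasCompactSupport.is_zero_at_infty <|
      (hK.image_of_continuousOn (φ.continuousOn.mono hKφ)).of_isClosed_subset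
        (isClosed_tsupport _) hsupp

theorem exists_mem_XTset_bump [T2Space V] [LocallyCompactSpace E1] [T2Space E1] {s : E1 → V}
    (hs : IsLocalHomeomorph s) {W : Set E1} (hW : IsOpen W) {e₀ : E1} (he₀ : e₀ ∈ W) :
    ∃ ξ ∈ XTset s, ξ e₀ = 1 ∧ support ξ ⊆ W ∧ InjOn s (support ξ) := by
  obtain ⟨φ, he₀φ, rfl⟩ := hs e₀
  obtain ⟨g, hg1, hgc, hgU, -⟩ := exists_continuousMap_one_of_isCompact_subset_isOpen
    isCompact_singleton (φ.open_source.inter hW) (singleton_subset_iff.2 ⟨he₀φ, he₀⟩)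
  have hsupp : support (fun e => (g e : ℂ)) ⊆ tsupport g :=
    fun e he => subset_tsupport _ (by simpa using he)
  refine ⟨_, mem_XTset_of_support_subset_compact φ (by fun_prop) hgc
    (hgU.trans inter_subset_left) hsupp, by simp [hg1 (mem_singleton e₀)],
    (hsupp.trans hgU).trans inter_subset_right,
    φ.injOn.mono ((hsupp.trans hgU).trans inter_subset_left)⟩

theorem innerT_eq_zero_of_notMem_range {s : E1 → V} {v : V} (hv : v ∉ range s) (ξ η : E1 → ℂ) :
    innerT s ξ η v = 0 :=
  have : IsEmpty {e : E1 // s e = v} := ⟨fun e => hv ⟨e, e.2⟩⟩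
  tsum_empty

theorem exists_zeroAtInfty_eq_one_eq_zero [T2Space V] [LocallyCompactSpace V] {x y : V}
    (h : x ≠ y) : ∃ f : C₀(V, ℂ), f x = 1 ∧ f y = 0 := by
  obtain ⟨g, hg1, hgc, hgy, -⟩ := exists_continuousMap_one_of_isCompact_subset_isOpen
    isCompact_singleton isOpen_compl_singleton (singleton_subset_iff.2 h)
  refine ⟨⟨⟨fun v => (g v : ℂ), by fun_prop⟩,
    (HasCompactSupport.comp_left hgc Complex.ofReal_zero).is_zero_at_infty⟩, ?_, ?_⟩
  · simp [hg1 (mem_singleton x)]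
  · simp [image_eq_zero_of_notMem_tsupport fun hy => hgy hy rfl]

theorem eq_of_symmetric [T2Space V] [LocallyCompactSpace V] {r s : E1 → V}
    (symm : ∀ f : C₀(V, ℂ), ∀ ξ ∈ XTset s, ∀ e, f (r e) * ξ e = ξ e * f (s e))
    (hfull : ∀ e, ∃ ξ ∈ XTset s, ξ e ≠ 0) : r = s := by
  funext e
  by_contra hne
  obtain ⟨f, hfr, hfs⟩ := exists_zeroAtInfty_eq_one_eq_zero hne
  obtain ⟨ξ, hξ, hξe⟩ := hfull e
  simpa [hfr, hfs, hξe] using symm f ξ hξ e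

theorem injective_of_compat [T2Space V] [LocallyCompactSpace E1] [T2Space E1] {s : E1 → V}
    (hs : IsLocalHomeomorph s) (L : (E1 → ℂ) → (E1 → ℂ) → V → ℂ)
    (compat : ∀ ξ ∈ XTset s, ∀ η ∈ XTset s, ∀ ζ ∈ XTset s, ∀ e : E1,
      L ξ η (s e) * ζ e = ξ e * innerT s η ζ (s e)) : Injective s := by
  intro e₁ e₂ hse
  by_contra hne
  obtain ⟨ξ, hξ, hξ₁, hξW, hξinj⟩ := exists_mem_XTset_bump hs isOpen_compl_singleton hne
  obtain ⟨ζ, hζ, hζ₂, -⟩ := exists_mem_XTset_bump hs isOpen_univ (mem_univ e₂)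
  have hξ₂ : ξ e₂ = 0 := notMem_support.1 fun h => hξW h rfl
  have hinner : innerT s ξ ξ (s e₁) = 1 := by
    refine ((hasSum_fiber_of_injOn (F := fun e => starRingEnd ℂ (ξ e) * ξ e)
      (hξinj.mono (support_mul_subset_right _ _)) (by simp [hξ₁])).tsum_eq).trans ?_
    simp [hξ₁]
  have at_e₁ := compat ξ hξ ξ hξ ξ hξ e₁
  have at_e₂ := compat ξ hξ ξ hξ ζ hζ e₂
  rw [hξ₁, hinner, mul_one, mul_one] at at_e₁
  rw [hζ₂, hξ₂, mul_one, zero_mul, ← hse, at_e₁] at at_e₂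
  exact one_ne_zero at_e₂

end Correspondence

section TrivialGraph

variable {V E1 : Type} [TopologicalSpace V] [TopologicalSpace E1] (φ : E1 ≃ₜ V)

theorem innerT_homeomorph (ξ η : E1 → ℂ) (v : V) :
    innerT φ ξ η v = starRingEnd ℂ (ξ (φ.symm v)) * η (φ.symm v) :=
  (hasSum_fiber_homeomorph φ (fun e => starRingEnd ℂ (ξ e) * η e) v).tsum_eq

@[simps]
noncomputable def pullbackₗ : C₀(V, ℂ) →ₗ[ℂ] E1 → ℂ where
  toFun f := f ∘ φ
  map_add' _ _ := rfl
  map_smul' _ _ := rfl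

theorem pullbackₗ_injective : Injective (pullbackₗ φ) := fun f g h =>
  ZeroAtInftyContinuousMap.ext fun v => by simpa [pullbackₗ] using congrFun h (φ.symm v)

theorem XTset_homeomorph_eq_range : XTset φ = LinearMap.range (pullbackₗ φ) := by
  have hfib (ξ : E1 → ℂ) : (fun v => ∑' e : {e : E1 // φ e = v}, ‖ξ e‖ ^ 2) =
      fun v => ‖ξ (φ.symm v)‖ ^ 2 :=
    funext fun v => (hasSum_fiber_homeomorph φ (fun e => ‖ξ e‖ ^ 2) v).tsum_eq
  ext ξ
  constructor
  · rintro ⟨hξ, -, -, hξ0⟩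
    rw [hfib] at hξ0
    have hξ0' : Tendsto (fun v => ξ (φ.symm v)) (cocompact V) (nhds 0) := by
      rw [tendsto_zero_iff_norm_tendsto_zero]
      simpa using hξ0.sqrt
    refine ⟨⟨⟨ξ ∘ φ.symm, hξ.comp φ.symm.continuous⟩, hξ0'⟩, funext fun e => ?_⟩
    simp
  · rintro ⟨f, rfl⟩
    refine ⟨f.continuous.comp φ.continuous, fun v =>
      (hasSum_fiber_homeomorph φ (fun e => ‖f (φ e)‖ ^ 2) v).summable,
      ?_, ?_⟩ <;> rw [hfib] <;>
      simp only [pullbackₗ_apply, comp_apply, Homeomorph.apply_symm_apply]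
    · exact f.continuous.norm.pow 2
    · simpa using (zero_at_infty f).norm.pow 2

theorem exists_linearEquiv_span_XTset :
    ∃ Φ : Submodule.span ℂ (XTset φ) ≃ₗ[ℂ] C₀(V, ℂ), ∀ ξ v, Φ ξ v = (ξ : E1 → ℂ) (φ.symm v) := by
  let Ψ := LinearEquiv.ofInjective _ (pullbackₗ_injective φ)
  have hspan : Submodule.span ℂ (XTset φ) = LinearMap.range (pullbackₗ φ) := by
    rw [XTset_homeomorph_eq_range, Submodule.span_eq]
  have hΨ z : pullbackₗ φ (Ψ.symm z) = z :=
    (LinearEquiv.ofInjective_apply _ _).symm.trans (congrArg Subtype.val (Ψ.apply_symm_apply z))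
  refine ⟨(LinearEquiv.ofEq _ _ hspan).trans Ψ.symm, fun ξ v => ?_⟩
  simpa using congrFun (hΨ (LinearEquiv.ofEq _ _ hspan ξ)) (φ.symm v)

end TrivialGraph

theorem stmt17_general {V E1 : Type} [TopologicalSpace V] [TopologicalSpace E1]
    [LocallyCompactSpace V] [T2Space V] [LocallyCompactSpace E1] [T2Space E1]
    (r s : E1 → V) (hs : IsLocalHomeomorph s)
    (symm : ∀ f : C₀(V, ℂ), ∀ ξ ∈ XTset s, ∀ e : E1,
      f (r e) * ξ e = ξ e * f (s e))
    (L : (E1 → ℂ) → (E1 → ℂ) → V → ℂ)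
    (compat : ∀ ξ ∈ XTset s, ∀ η ∈ XTset s, ∀ ζ ∈ XTset s, ∀ e : E1,
      L ξ η (r e) * ζ e = ξ e * innerT s η ζ (s e))
    (full_right : ∀ v : V, ∃ ξ ∈ XTset s, innerT s ξ ξ v ≠ 0) :
    (∀ e, r e = s e) ∧ IsHomeomorph s ∧
    (∃ φ : E1 ≃ₜ V, ∀ e, r e = φ e ∧ s e = φ e) ∧
    (∃ Φ : (Submodule.span ℂ (XTset s) : Submodule ℂ (E1 → ℂ)) ≃ₗ[ℂ] C₀(V, ℂ),
      (∀ ξ η : (Submodule.span ℂ (XTset s) : Submodule ℂ (E1 → ℂ)), ∀ v : V,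
        innerT s (ξ : E1 → ℂ) (η : E1 → ℂ) v = starRingEnd ℂ (Φ ξ v) * Φ η v) ∧
      (∀ (f : C₀(V, ℂ)) (ξ ζ : (Submodule.span ℂ (XTset s) : Submodule ℂ (E1 → ℂ))),
        ((ζ : E1 → ℂ) = fun e => f (r e) * (ξ : E1 → ℂ) e) →
          ∀ v, Φ ζ v = f v * Φ ξ v)) := by
  obtain rfl : r = s := eq_of_symmetric symm fun e => by
    obtain ⟨ξ, hξ, hξe, -⟩ := exists_mem_XTset_bump hs isOpen_univ (mem_univ e)
    exact ⟨ξ, hξ, hξe ▸ one_ne_zero⟩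
  have hsurj : Surjective r := fun v => by
    by_contra hv
    obtain ⟨ξ, -, hξv⟩ := full_right v
    exact hξv (innerT_eq_zero_of_notMem_range hv ξ ξ)
  obtain ⟨φ, rfl⟩ := isHomeomorph_iff_exists_homeomorph.mp
    ⟨hs.continuous, hs.isOpenMap, injective_of_compat hs L compat, hsurj⟩
  obtain ⟨Φ, hΦ⟩ := exists_linearEquiv_span_XTset φ
  refine ⟨fun _ => rfl, φ.isHomeomorph, ⟨φ, fun _ => ⟨rfl, rfl⟩⟩, Φ, fun ξ η v => ?_,
    fun f ξ ζ hζ v => ?_⟩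
  · rw [innerT_homeomorph, hΦ, hΦ]
  · simp only [hΦ, hζ, Homeomorph.apply_symm_apply]

/-- Let E = (V, E¹, r, s) be a topological graph whose correspondence
X_E is a symmetric C₀(V)-imprimitivity bimodule (symmetric: the left and right
actions coincide; imprimitivity: there is a full left C₀(V)-valued inner product L
compatible with the full right one, ⟨ξ,η⟩_L·ζ = ξ·⟨η,ζ⟩).  Then r = s, the source
map s is a homeomorphism E¹ ≅ V (so E is isomorphic to the trivial graph
(V, V, id, id) by a vertex-fixing isomorphism), and X_E is isomorphic to the
trivial C₀(V)-correspondence C₀(V). -/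
theorem stmt17 {V E1 : Type} [TopologicalSpace V] [TopologicalSpace E1]
    [LocallyCompactSpace V] [T2Space V] [LocallyCompactSpace E1] [T2Space E1]
    (r s : E1 → V) (hr : Continuous r) (hs : IsLocalHomeomorph s)
    (symm : ∀ f : C₀(V, ℂ), ∀ ξ ∈ XTset s, ∀ e : E1,
      f (r e) * ξ e = ξ e * f (s e))
    (L : (E1 → ℂ) → (E1 → ℂ) → V → ℂ)
    (hL_C0 : ∀ ξ ∈ XTset s, ∀ η ∈ XTset s, Continuous (L ξ η) ∧
      Filter.Tendsto (L ξ η) (Filter.cocompact V) (nhds 0))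
    (compat : ∀ ξ ∈ XTset s, ∀ η ∈ XTset s, ∀ ζ ∈ XTset s, ∀ e : E1,
      L ξ η (r e) * ζ e = ξ e * innerT s η ζ (s e))
    (full_right : ∀ v : V, ∃ ξ ∈ XTset s, innerT s ξ ξ v ≠ 0)
    (full_left : ∀ v : V, ∃ ξ ∈ XTset s, ∃ η ∈ XTset s, L ξ η v ≠ 0) :
    (∀ e, r e = s e) ∧ IsHomeomorph s ∧
    (∃ φ : E1 ≃ₜ V, ∀ e, r e = φ e ∧ s e = φ e) ∧
    (∃ Φ : (Submodule.span ℂ (XTset s) : Submodule ℂ (E1 → ℂ)) ≃ₗ[ℂ] C₀(V, ℂ),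
      (∀ ξ η : (Submodule.span ℂ (XTset s) : Submodule ℂ (E1 → ℂ)), ∀ v : V,
        innerT s (ξ : E1 → ℂ) (η : E1 → ℂ) v = starRingEnd ℂ (Φ ξ v) * Φ η v) ∧
      (∀ (f : C₀(V, ℂ)) (ξ ζ : (Submodule.span ℂ (XTset s) : Submodule ℂ (E1 → ℂ))),
        ((ζ : E1 → ℂ) = fun e => f (r e) * (ξ : E1 → ℂ) e) →
          ∀ v, Φ ζ v = f v * Φ ξ v)) :=
  stmt17_general r s hs symm L compat full_right
end
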